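/- arXiv:1911.07991 — 7 statements merged into one kernel-verified Lean document; each statement's English description precedes it below -/
import Mathlib

section
/- Let (X,d_X) and (Y,d_Y) be quasi-metric spaces and let τ : X → Y be an almost isometry with associated functions φ : X → ℝ and ψ : Y → ℝ, i.e. d_Y(τ(x₁),τ(x₂)) = d_X(x₁,x₂) + φ(x₁) − φ(x₂) for all x₁,x₂ ∈ X and d_X(τ⁻¹(y₁),τ⁻¹(y₂)) = d_Y(y₁,y₂) + ψ(y₁) − ψ(y₂) for all y₁,y₂ ∈ Y. If τ is strict with constant c ≥ 1, i.e. c⁻¹ d_X(x₁,x₂) ≤ d_Y(τ(x₁),τ(x₂)) ≤ c d_X(x₁,x₂) for all x₁,x₂ ∈ X, then φ(x₂) − φ(x₁) ≤ (1 − c⁻¹) d_X(x₁,x₂) for all x₁,x₂ ∈ X, and ψ(y₂) − ψ(y₁) ≤ (1 − c⁻¹) d_Y(y₁,y₂) for all y₁,y₂ ∈ Y; in particular ‖φ|_S ≤ 1 − c⁻¹ < 1 and ‖ψ|_S ≤ 1 − c⁻¹ < 1. -/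
/-- A quasi-metric space structure on `X`. -/
structure QuasiMetric (X : Type*) where
  d : X → X → ℝ
  nonneg : ∀ x y, 0 ≤ d x y
  refl : ∀ x, d x x = 0
  sep : ∀ x y, d x y = 0 → d y x = 0 → x = y
  triangle : ∀ x y z, d x y ≤ d x z + d z y

/-- If an almost isometry `τ` (with inverse `σ` and associated functions
`φ`, `ψ`) is strict with constant `c ≥ 1`, then `φ` and `ψ` are
semi-Lipschitz with constant `1 - c⁻¹ < 1`. -/
theorem strict_almost_isometry_semiLipschitz {X Y : Type*}
    (dX : QuasiMetric X) (dY : QuasiMetric Y)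
    (τ : X → Y) (σ : Y → X)
    (hστ : ∀ x, σ (τ x) = x) (hτσ : ∀ y, τ (σ y) = y)
    (hT : ∀ x1 x2 x3,
      dY.d (τ x1) (τ x2) + dY.d (τ x2) (τ x3) - dY.d (τ x1) (τ x3)
        = dX.d x1 x2 + dX.d x2 x3 - dX.d x1 x3)
    (φ : X → ℝ) (ψ : Y → ℝ)
    (hφ : ∀ x1 x2, dY.d (τ x1) (τ x2) = dX.d x1 x2 + φ x1 - φ x2)
    (hψ : ∀ y1 y2, dX.d (σ y1) (σ y2) = dY.d y1 y2 + ψ y1 - ψ y2)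
    (c : ℝ) (hc : 1 ≤ c)
    (hstrict : ∀ x1 x2,
      c⁻¹ * dX.d x1 x2 ≤ dY.d (τ x1) (τ x2) ∧
      dY.d (τ x1) (τ x2) ≤ c * dX.d x1 x2) :
    (∀ x1 x2, φ x2 - φ x1 ≤ (1 - c⁻¹) * dX.d x1 x2) ∧
    (∀ y1 y2, ψ y2 - ψ y1 ≤ (1 - c⁻¹) * dY.d y1 y2) ∧
    (1 - c⁻¹ < 1) := by
  have hc0 : (0:ℝ) < c := lt_of_lt_of_le one_pos hc
  refine ⟨?_, ?_, ?_⟩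
  · intro x1 x2
    have h1 := (hstrict x1 x2).1
    have h2 := hφ x1 x2
    nlinarith
  · intro y1 y2
    have h2 := (hstrict (σ y1) (σ y2)).2
    rw [hτσ, hτσ] at h2
    have h3 := hψ y1 y2
    have hinv : c⁻¹ * dY.d y1 y2 ≤ dX.d (σ y1) (σ y2) := by
      rw [inv_mul_le_iff₀ hc0]; linarith [mul_comm c (dX.d (σ y1) (σ y2))]
    nlinarith
  · have : 0 < c⁻¹ := inv_pos.mpr hc0
    linarith
end

section
/- Let (X,d) be a quasi-metric space and let φ : X → ℝ satisfy φ(x') − φ(x) ≤ d(x,x') for all x,x' ∈ X. Then d'(x,x') := d(x,x') + φ(x) − φ(x') defines a quasi-metric on X (it is nonnegative, vanishes on the diagonal, and satisfies the triangle inequality, and d'(x,x') = d'(x',x) = 0 implies x = x'), and the identity map from (X,d) to (X,d') is an almost isometry. If moreover (X,d) is T₁ (d(x,y) = 0 implies x = y) and φ(x') − φ(x) < d(x,x') whenever x ≠ x', then (X,d') is a T₁-quasi-metric space. -/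
/-- If `φ(x') - φ(x) ≤ d(x,x')` for all `x,x'`, then
`d'(x,x') = d(x,x') + φ(x) - φ(x')` is a quasi-metric, the identity is an
almost isometry from `(X,d)` to `(X,d')` (the triangular functions agree),
and if `d` is `T₁` and the inequality is strict off the diagonal then `d'`
is a `T₁`-quasi-metric. -/
theorem perturbed_quasiMetric {X : Type*} (d : QuasiMetric X) (φ : X → ℝ)
    (hφ : ∀ x x', φ x' - φ x ≤ d.d x x') :
    (∀ x x', 0 ≤ d.d x x' + φ x - φ x') ∧
    (∀ x, d.d x x + φ x - φ x = 0) ∧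
    (∀ x y z, d.d x y + φ x - φ y
        ≤ (d.d x z + φ x - φ z) + (d.d z y + φ z - φ y)) ∧
    (∀ x y, d.d x y + φ x - φ y = 0 → d.d y x + φ y - φ x = 0 → x = y) ∧
    (∀ x1 x2 x3,
      (d.d x1 x2 + φ x1 - φ x2) + (d.d x2 x3 + φ x2 - φ x3)
        - (d.d x1 x3 + φ x1 - φ x3)
      = d.d x1 x2 + d.d x2 x3 - d.d x1 x3) ∧
    ((∀ x y, d.d x y = 0 → x = y) →
      (∀ x x', x ≠ x' → φ x' - φ x < d.d x x') →
      ∀ x y, d.d x y + φ x - φ y = 0 → x = y) := by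
  refine ⟨?_, ?_, ?_, ?_, ?_, ?_⟩
  · intro x x'; have := hφ x x'; linarith
  · intro x; simp [d.refl]
  · intro x y z; have := d.triangle x y z; linarith
  · intro x y h1 h2
    have n1 := d.nonneg x y; have n2 := d.nonneg y x
    exact d.sep x y (by linarith) (by linarith)
  · intro x1 x2 x3; ring
  · intro hT1 hstrict x y h
    by_contra hne
    have := hstrict x y hne
    linarith
end

section
/- Let (X,d) be a quasi-metric space, let 0 ≤ α < 1, and let φ : X → ℝ satisfy φ(x') − φ(x) ≤ α d(x,x') for all x,x' ∈ X. Define the quasi-metric d'(x,x') := d(x,x') + φ(x) − φ(x'). Then (1−α) d^s(x,x') ≤ (d')^s(x,x') ≤ (1+α) d^s(x,x') for all x,x' ∈ X, where d^s and (d')^s are the symmetrized metrics; consequently (X,d') is bicomplete if and only if (X,d) is bicomplete. -/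
/-- Sequential completeness of a distance function: every Cauchy sequence
converges. Applied to the symmetrized distance `d^s`, this is the
bicompleteness of the quasi-metric space. -/
def IsCompleteSeq {X : Type*} (ds : X → X → ℝ) : Prop :=
  ∀ u : ℕ → X,
    (∀ ε : ℝ, 0 < ε → ∃ N : ℕ, ∀ m ≥ N, ∀ n ≥ N, ds (u m) (u n) < ε) →
    ∃ x : X, ∀ ε : ℝ, 0 < ε → ∃ N : ℕ, ∀ n ≥ N, ds (u n) x < ε

lemma isCompleteSeq_of_le {X : Type*} (ds ds' : X → X → ℝ) (c C : ℝ)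
    (hc : 0 < c) (hC : 0 < C)
    (h1 : ∀ x y, c * ds x y ≤ ds' x y) (h2 : ∀ x y, ds' x y ≤ C * ds x y)
    (H : IsCompleteSeq ds') : IsCompleteSeq ds := by
  intro u hu
  obtain ⟨x, hx⟩ := H u (fun ε hε => by
    obtain ⟨N, hN⟩ := hu (ε / C) (by positivity)
    exact ⟨N, fun m hm n hn =>
      lt_of_le_of_lt (h2 _ _) (by
        have := hN m hm n hn
        calc C * ds (u m) (u n) < C * (ε / C) := by nlinarith
          _ = ε := by field_simp)⟩)
  refine ⟨x, fun ε hε => ?_⟩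
  obtain ⟨N, hN⟩ := hx (c * ε) (by positivity)
  refine ⟨N, fun n hn => ?_⟩
  have := hN n hn
  have h := h1 (u n) x
  nlinarith

/-- If `φ(x') - φ(x) ≤ α d(x,x')` with `0 ≤ α < 1` and
`d'(x,x') = d(x,x') + φ(x) - φ(x')`, then the symmetrized metrics satisfy
`(1-α) d^s ≤ (d')^s ≤ (1+α) d^s`; consequently `(X,d')` is bicomplete iff
`(X,d)` is bicomplete. -/
theorem perturbed_symmetrized_equiv_and_bicomplete {X : Type*}
    (d : QuasiMetric X) (α : ℝ) (hα0 : 0 ≤ α) (hα1 : α < 1)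
    (φ : X → ℝ) (hφ : ∀ x x', φ x' - φ x ≤ α * d.d x x') :
    (∀ x x',
      (1 - α) * max (d.d x x') (d.d x' x)
          ≤ max (d.d x x' + φ x - φ x') (d.d x' x + φ x' - φ x) ∧
      max (d.d x x' + φ x - φ x') (d.d x' x + φ x' - φ x)
          ≤ (1 + α) * max (d.d x x') (d.d x' x)) ∧
    (IsCompleteSeq
        (fun x x' => max (d.d x x' + φ x - φ x') (d.d x' x + φ x' - φ x)) ↔
      IsCompleteSeq (fun x x' => max (d.d x x') (d.d x' x))) := by
  have key : ∀ x x',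
      (1 - α) * max (d.d x x') (d.d x' x)
          ≤ max (d.d x x' + φ x - φ x') (d.d x' x + φ x' - φ x) ∧
      max (d.d x x' + φ x - φ x') (d.d x' x + φ x' - φ x)
          ≤ (1 + α) * max (d.d x x') (d.d x' x) := by
    intro x x'
    have h1 := hφ x x'
    have h2 := hφ x' x
    have n1 := d.nonneg x x'
    have n2 := d.nonneg x' x
    constructor
    · rcases max_cases (d.d x x') (d.d x' x) with ⟨he, hle⟩ | ⟨he, hle⟩ <;>
        rw [he]
      · exact le_max_of_le_left (by nlinarith)
      · exact le_max_of_le_right (by nlinarith)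
    · apply max_le
      · calc d.d x x' + φ x - φ x' ≤ d.d x x' + α * d.d x' x := by linarith
          _ ≤ (1 + α) * max (d.d x x') (d.d x' x) := by
            have := le_max_left (d.d x x') (d.d x' x)
            have := le_max_right (d.d x x') (d.d x' x)
            nlinarith
      · calc d.d x' x + φ x' - φ x ≤ d.d x' x + α * d.d x x' := by linarith
          _ ≤ (1 + α) * max (d.d x x') (d.d x' x) := by
            have := le_max_left (d.d x x') (d.d x' x)
            have := le_max_right (d.d x x') (d.d x' x)
            nlinarith
  refine ⟨key, ?_⟩
  constructor
  · intro H
    exact isCompleteSeq_of_le _ _ (1 - α) (1 + α) (by linarith) (by linarith)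
      (fun x y => (key x y).1) (fun x y => (key x y).2) H
  · intro H
    refine isCompleteSeq_of_le _ _ (1 / (1 + α)) (1 / (1 - α))
      (by positivity) (one_div_pos.mpr (by linarith))
      (fun x y => ?_) (fun x y => ?_) H
    · have := (key x y).2
      have h : (0:ℝ) < 1 + α := by linarith
      rw [div_mul_eq_mul_div, div_le_iff₀ h]
      nlinarith [(key x y).2]
    · have h : (0:ℝ) < 1 - α := by linarith
      rw [div_mul_eq_mul_div, le_div_iff₀ h]
      nlinarith [(key x y).1]
end

section
/- Let (X,d_X) and (Y,d_Y) be quasi-metric spaces, τ : X → Y a bijection, and φ : X → ℝ a function such that d_Y(τ(x₁),τ(x₂)) = d_X(x₁,x₂) + φ(x₁) − φ(x₂) for all x₁,x₂ ∈ X. Suppose φ(x₂) − φ(x₁) ≤ α d_X(x₁,x₂) for all x₁,x₂, where 0 ≤ α ≤ 1. If f : Y → ℝ is semi-Lipschitz with constant L, where 0 ≤ L ≤ 1 (i.e. f(y₂) − f(y₁) ≤ L d_Y(y₁,y₂) for all y₁,y₂ ∈ Y), then the function g = f∘τ + φ is semi-Lipschitz on (X,d_X) with constant L + (1−L)α, i.e.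 g(x₂) − g(x₁) ≤ (L + (1−L)α) d_X(x₁,x₂) for all x₁,x₂ ∈ X. In particular, if L ≤ 1 and α ≤ 1 then g has semi-Lipschitz constant at most 1, and if L < 1 and α < 1 then g has semi-Lipschitz constant strictly less than 1. -/
/-- If `d_Y(τ x₁, τ x₂) = d_X(x₁,x₂) + φ x₁ - φ x₂`, `φ` is semi-Lipschitz
with constant `α ∈ [0,1]` and `f` is semi-Lipschitz on `Y` with constant
`L ∈ [0,1]`, then `g = f∘τ + φ` is semi-Lipschitz on `X` with constant
`L + (1-L)α`. -/
theorem comp_add_potential_semiLipschitz {X Y : Type*}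
    (dX : QuasiMetric X) (dY : QuasiMetric Y)
    (τ : X → Y) (hτ : Function.Bijective τ) (φ : X → ℝ)
    (h : ∀ x1 x2, dY.d (τ x1) (τ x2) = dX.d x1 x2 + φ x1 - φ x2)
    (α : ℝ) (hα0 : 0 ≤ α) (hα1 : α ≤ 1)
    (hφ : ∀ x1 x2, φ x2 - φ x1 ≤ α * dX.d x1 x2)
    (f : Y → ℝ) (L : ℝ) (hL0 : 0 ≤ L) (hL1 : L ≤ 1)
    (hf : ∀ y1 y2, f y2 - f y1 ≤ L * dY.d y1 y2) :
    ∀ x1 x2,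
      (f (τ x2) + φ x2) - (f (τ x1) + φ x1)
        ≤ (L + (1 - L) * α) * dX.d x1 x2 := by
  intro x1 x2
  have hf' := hf (τ x1) (τ x2)
  rw [h x1 x2] at hf'
  have hφ' := hφ x1 x2
  nlinarith [dX.nonneg x1 x2]
end

section
/- Let (X,d_X) and (Y,d_Y) be quasi-metric spaces and let τ : X → Y be a strict almost isometry with associated function φ : X → ℝ, i.e. τ is a bijection, d_Y(τ(x₁),τ(x₂)) = d_X(x₁,x₂) + φ(x₁) − φ(x₂) for all x₁,x₂ ∈ X, and there exists c ≥ 1 with c⁻¹ d_X(x₁,x₂) ≤ d_Y(τ(x₁),τ(x₂)) ≤ c d_X(x₁,x₂) for all x₁,x₂. Let SLip_{1⁻}(Y) denote the set of functions f : Y → ℝ that are semi-Lipschitz with some constant L < 1, and similarly SLip_{1⁻}(X). Then the map T defined by Tf = f∘τ + φ is a bijection from SLip_{1⁻}(Y) onto SLip_{1⁻}(X) with inverse T⁻¹g = g∘τ⁻¹ − φ∘τ⁻¹, and T preserves order and convex combinations: f ≥ g pointwise if and only if Tf ≥ Tg pointwise, and T(λf + (1−λ)g) = λTf + (1−λ)Tg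 for all f,g ∈ SLip_{1⁻}(Y) and λ ∈ [0,1]. -/
/-- The set of functions that are semi-Lipschitz with some constant `L < 1`. -/
def SLipLtOne {X : Type*} (d : X → X → ℝ) : Set (X → ℝ) :=
  {f | ∃ L : ℝ, 0 ≤ L ∧ L < 1 ∧ ∀ x y, f y - f x ≤ L * d x y}

/-- A strict almost isometry `τ` (with inverse `σ`, associated function `φ`
and constant `c ≥ 1`) induces the map `T f = f∘τ + φ`, which is a bijection
from `SLip_{1⁻}(Y)` onto `SLip_{1⁻}(X)` with inverse `g ↦ g∘τ⁻¹ - φ∘τ⁻¹`,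
and preserves order and convex combinations. -/
theorem strict_almost_isometry_induces_isomorphism {X Y : Type*}
    (dX : QuasiMetric X) (dY : QuasiMetric Y)
    (τ : X → Y) (σ : Y → X)
    (hστ : ∀ x, σ (τ x) = x) (hτσ : ∀ y, τ (σ y) = y)
    (φ : X → ℝ)
    (hφ : ∀ x1 x2, dY.d (τ x1) (τ x2) = dX.d x1 x2 + φ x1 - φ x2)
    (c : ℝ) (hc : 1 ≤ c)
    (hstrict : ∀ x1 x2,
      c⁻¹ * dX.d x1 x2 ≤ dY.d (τ x1) (τ x2) ∧
      dY.d (τ x1) (τ x2) ≤ c * dX.d x1 x2) :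
    (∀ f ∈ SLipLtOne dY.d, (fun x => f (τ x) + φ x) ∈ SLipLtOne dX.d) ∧
    (∀ g ∈ SLipLtOne dX.d, (fun y => g (σ y) - φ (σ y)) ∈ SLipLtOne dY.d) ∧
    (∀ f : Y → ℝ, (fun y => (f (τ (σ y)) + φ (σ y)) - φ (σ y)) = f) ∧
    (∀ g : X → ℝ, (fun x => (g (σ (τ x)) - φ (σ (τ x))) + φ x) = g) ∧
    (∀ f g : Y → ℝ, (∀ y, g y ≤ f y) ↔
      (∀ x, g (τ x) + φ x ≤ f (τ x) + φ x)) ∧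
    (∀ (f g : Y → ℝ) (l : ℝ), l ∈ Set.Icc (0 : ℝ) 1 →
      (fun x => (l * f (τ x) + (1 - l) * g (τ x)) + φ x)
        = fun x => l * (f (τ x) + φ x) + (1 - l) * (g (τ x) + φ x)) := by

  have hc0 : (0:ℝ) < c := lt_of_lt_of_le one_pos hc
  refine ⟨?_, ?_, ?_, ?_, ?_, ?_⟩
  · rintro f ⟨L, hL0, hL1, hf⟩
    refine ⟨1 - (1 - L) / c, ?_, ?_, ?_⟩
    · have h1 : (1 - L) / c ≤ 1 := by
        rw [div_le_one hc0]; linarith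
      linarith
    · have : 0 < (1 - L) / c := div_pos (by linarith) hc0
      linarith
    · intro x y
      have h1 := hf (τ x) (τ y)
      have h2 := hφ x y
      have h3 := (hstrict x y).1
      have h4 : (1 - L) * (c⁻¹ * dX.d x y) ≤ (1 - L) * dY.d (τ x) (τ y) :=
        mul_le_mul_of_nonneg_left h3 (by linarith)
      have : f (τ y) + φ y - (f (τ x) + φ x)
          ≤ L * dY.d (τ x) (τ y) + (dX.d x y - dY.d (τ x) (τ y)) := by linarith
      calc f (τ y) + φ y - (f (τ x) + φ x)
          ≤ dX.d x y - (1 - L) * dY.d (τ x) (τ y) := by linarith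
        _ ≤ dX.d x y - (1 - L) * (c⁻¹ * dX.d x y) := by linarith
        _ = (1 - (1 - L) / c) * dX.d x y := by field_simp
  · rintro g ⟨L, hL0, hL1, hg⟩
    refine ⟨1 - (1 - L) / c, ?_, ?_, ?_⟩
    · have h1 : (1 - L) / c ≤ 1 := by
        rw [div_le_one hc0]; linarith
      linarith
    · have : 0 < (1 - L) / c := div_pos (by linarith) hc0
      linarith
    · intro y1 y2
      have h1 := hg (σ y1) (σ y2)
      have h2 := hφ (σ y1) (σ y2)
      rw [hτσ, hτσ] at h2
      have h3 := (hstrict (σ y1) (σ y2)).2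
      rw [hτσ, hτσ] at h3
      have h3' : c⁻¹ * dY.d y1 y2 ≤ dX.d (σ y1) (σ y2) := by
        rw [inv_mul_le_iff₀ hc0]; linarith
      have h4 : (1 - L) * (c⁻¹ * dY.d y1 y2) ≤ (1 - L) * dX.d (σ y1) (σ y2) :=
        mul_le_mul_of_nonneg_left h3' (by linarith)
      calc g (σ y2) - φ (σ y2) - (g (σ y1) - φ (σ y1))
          ≤ dY.d y1 y2 - (1 - L) * dX.d (σ y1) (σ y2) := by linarith
        _ ≤ dY.d y1 y2 - (1 - L) * (c⁻¹ * dY.d y1 y2) := by linarith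
        _ = (1 - (1 - L) / c) * dY.d y1 y2 := by field_simp
  · intro f; funext y; rw [hτσ]; ring
  · intro g; funext x; rw [hστ]; ring
  · intro f g
    constructor
    · intro h x; have := h (τ x); linarith
    · intro h y
      have := h (σ y); rw [hτσ] at this; linarith
  · intro f g l _
    funext x; ring
end

section
/- Let (X,d_X) and (Y,d_Y) be quasi-metric spaces and let SLip_{1⁻}(X) (resp. SLip_{1⁻}(Y)) denote the set of functions f : X → ℝ (resp. f : Y → ℝ) that are semi-Lipschitz with some constant L < 1. Let T : SLip_{1⁻}(Y) → SLip_{1⁻}(X) be a bijection preserving order and convex combinations (f ≥ g pointwise iff Tf ≥ Tg pointwise, and T(λf + (1−λ)g) = λTf + (1−λ)Tg for λ ∈ [0,1]). Then: (a) for g ∈ SLip_{1⁻}(Y), the function Tg − T0 is constant if and only if g is constant; and (b) there exists a real number c > 0 such that T(λ·𝟙) = T0 + cλ for every λ ∈ ℝ, where λ·𝟙 denotes the constant function with value λ on Y (in particular the function T1 − T0 is the positive constant c). -/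
/-- Every constant function belongs to `SLip_{1⁻}`. -/
lemma const_mem_SLipLtOne {X : Type*} (d : X → X → ℝ) (k : ℝ) :
    (fun _ : X => k) ∈ SLipLtOne d :=
  ⟨0, le_rfl, zero_lt_one, fun x y => by simp⟩

lemma le_zero_of_forall_mul_le (a C : ℝ)
    (h : ∀ n : ℕ, ((n : ℝ) + 1) * a ≤ C) : a ≤ 0 := by
  by_contra hpos
  push_neg at hpos
  obtain ⟨n, hn⟩ := exists_nat_gt (C / a)
  have h3 : C < (n:ℝ) * a := (div_lt_iff₀ hpos).mp hn
  nlinarith [h n]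

lemma shift_mem_SLipLtOne {X : Type*} (d : X → X → ℝ) {f : X → ℝ}
    (hf : f ∈ SLipLtOne d) (k : ℝ) : (fun x => f x + k) ∈ SLipLtOne d := by
  obtain ⟨L, h0, h1, hL⟩ := hf
  exact ⟨L, h0, h1, fun x y => by have := hL x y; simp only; linarith⟩

lemma combo_mem_SLipLtOne {X : Type*} (d : X → X → ℝ)
    {f g : X → ℝ} (hf : f ∈ SLipLtOne d) (hg : g ∈ SLipLtOne d)
    {l : ℝ} (hl : l ∈ Set.Icc (0:ℝ) 1) :
    (fun y => l * f y + (1 - l) * g y) ∈ SLipLtOne d := by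
  obtain ⟨L1, hL10, hL11, hL1⟩ := hf
  obtain ⟨L2, hL20, hL21, hL2⟩ := hg
  obtain ⟨hl0, hl1⟩ := hl
  refine ⟨l * L1 + (1 - l) * L2,
    add_nonneg (mul_nonneg hl0 hL10) (mul_nonneg (by linarith) hL20), ?_, ?_⟩
  · rcases eq_or_lt_of_le hl0 with h | h
    · rw [← h]; simpa using hL21
    · linarith [mul_pos h (sub_pos.mpr hL11),
        mul_nonneg (by linarith : (0:ℝ) ≤ 1 - l) (by linarith : (0:ℝ) ≤ 1 - L2)]
  · intro x y
    have h1 := mul_le_mul_of_nonneg_left (hL1 x y) hl0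
    have h2 := mul_le_mul_of_nonneg_left (hL2 x y) (by linarith : (0:ℝ) ≤ 1 - l)
    simp only
    nlinarith

/-- For a bijection `T : SLip_{1⁻}(Y) → SLip_{1⁻}(X)` preserving order and
convex combinations: (a) `Tg - T0` is constant iff `g` is constant; and
(b) there is `c > 0` with `T(λ·𝟙) = T0 + c·λ` for every `λ ∈ ℝ`. -/
theorem action_on_constants {X Y : Type*}
    (dX : QuasiMetric X) (dY : QuasiMetric Y)
    (T : SLipLtOne dY.d → SLipLtOne dX.d)
    (hbij : Function.Bijective T)
    (horder : ∀ f g : SLipLtOne dY.d,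
      (∀ y, (g : Y → ℝ) y ≤ (f : Y → ℝ) y) ↔
      (∀ x, (T g : X → ℝ) x ≤ (T f : X → ℝ) x))
    (hconv : ∀ (f g : SLipLtOne dY.d) (l : ℝ), l ∈ Set.Icc (0 : ℝ) 1 →
      ∀ h : (fun y => l * (f : Y → ℝ) y + (1 - l) * (g : Y → ℝ) y)
          ∈ SLipLtOne dY.d,
      (T ⟨_, h⟩ : X → ℝ)
        = fun x => l * (T f : X → ℝ) x + (1 - l) * (T g : X → ℝ) x) :
    (∀ g : SLipLtOne dY.d,
      (∃ k : ℝ, ∀ x, (T g : X → ℝ) x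
          - (T ⟨fun _ => 0, const_mem_SLipLtOne dY.d 0⟩ : X → ℝ) x = k)
        ↔ (∃ k : ℝ, ∀ y, (g : Y → ℝ) y = k)) ∧
    (∃ c : ℝ, 0 < c ∧ ∀ l : ℝ, ∀ x : X,
      (T ⟨fun _ => l, const_mem_SLipLtOne dY.d l⟩ : X → ℝ) x
        = (T ⟨fun _ => 0, const_mem_SLipLtOne dY.d 0⟩ : X → ℝ) x + c * l) := by
  classical
  -- Step A : for every constant k, the function T(k·𝟙) - T(0) is "flat"
  have stepA : ∀ (k : ℝ) (x x' : X),
      (T ⟨fun _ => k, const_mem_SLipLtOne dY.d k⟩ : X → ℝ) x'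
        - (T ⟨fun _ => 0, const_mem_SLipLtOne dY.d 0⟩ : X → ℝ) x'
      ≤ (T ⟨fun _ => k, const_mem_SLipLtOne dY.d k⟩ : X → ℝ) x
        - (T ⟨fun _ => 0, const_mem_SLipLtOne dY.d 0⟩ : X → ℝ) x := by
    intro k x x'
    have key : ∀ n : ℕ, ((n:ℝ) + 1) *
        (((T ⟨fun _ => k, const_mem_SLipLtOne dY.d k⟩ : X → ℝ) x'
          - (T ⟨fun _ => 0, const_mem_SLipLtOne dY.d 0⟩ : X → ℝ) x')
        - ((T ⟨fun _ => k, const_mem_SLipLtOne dY.d k⟩ : X → ℝ) x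
          - (T ⟨fun _ => 0, const_mem_SLipLtOne dY.d 0⟩ : X → ℝ) x))
        ≤ (dX.d x x' + dX.d x' x) := by
      intro n
      have hm0 : (0:ℝ) < (n:ℝ) + 1 := by positivity
      have hm' : ((n:ℝ) + 1) ≠ 0 := ne_of_gt hm0
      have hcn : (0:ℝ) ≤ (n:ℝ) := Nat.cast_nonneg n
      have hl : 1 / ((n:ℝ)+1) ∈ Set.Icc (0:ℝ) 1 :=
        ⟨by positivity, by rw [div_le_one hm0]; linarith⟩
      have hmem : (fun y => 1/((n:ℝ)+1) *
            ((⟨fun _ => ((n:ℝ)+1) * k, const_mem_SLipLtOne dY.d (((n:ℝ)+1)*k)⟩ :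
              SLipLtOne dY.d) : Y → ℝ) y
          + (1 - 1/((n:ℝ)+1)) *
            ((⟨fun _ => 0, const_mem_SLipLtOne dY.d 0⟩ : SLipLtOne dY.d) : Y → ℝ) y)
          ∈ SLipLtOne dY.d :=
        ⟨0, le_rfl, zero_lt_one, fun a b => by simp⟩
      have heq : (⟨fun _ => k, const_mem_SLipLtOne dY.d k⟩ : SLipLtOne dY.d)
          = ⟨_, hmem⟩ :=
        Subtype.ext (funext fun y => by
          show k = 1/((n:ℝ)+1) * (((n:ℝ)+1) * k) + (1 - 1/((n:ℝ)+1)) * 0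
          field_simp
          ring)
      have hcomb : (T ⟨fun _ => k, const_mem_SLipLtOne dY.d k⟩ : X → ℝ)
          = fun z => 1/((n:ℝ)+1) *
              (T ⟨fun _ => ((n:ℝ)+1)*k, const_mem_SLipLtOne dY.d (((n:ℝ)+1)*k)⟩ : X → ℝ) z
            + (1 - 1/((n:ℝ)+1)) *
              (T ⟨fun _ => 0, const_mem_SLipLtOne dY.d 0⟩ : X → ℝ) z := by
        rw [heq]
        exact hconv _ _ _ hl hmem
      obtain ⟨L, hL0, hL1, hL⟩ :=
        (T ⟨fun _ => ((n:ℝ)+1)*k, const_mem_SLipLtOne dY.d (((n:ℝ)+1)*k)⟩).2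
      obtain ⟨L0, hL00, hL01, hL0'⟩ :=
        (T ⟨fun _ => 0, const_mem_SLipLtOne dY.d 0⟩).2
      have e1 : (T ⟨fun _ => ((n:ℝ)+1)*k, const_mem_SLipLtOne dY.d (((n:ℝ)+1)*k)⟩ : X → ℝ) x'
          - (T ⟨fun _ => ((n:ℝ)+1)*k, const_mem_SLipLtOne dY.d (((n:ℝ)+1)*k)⟩ : X → ℝ) x
          ≤ dX.d x x' := by
        have h := hL x x'
        nlinarith [dX.nonneg x x', mul_nonneg (sub_nonneg.mpr hL1.le) (dX.nonneg x x')]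
      have e2 : (T ⟨fun _ => 0, const_mem_SLipLtOne dY.d 0⟩ : X → ℝ) x
          - (T ⟨fun _ => 0, const_mem_SLipLtOne dY.d 0⟩ : X → ℝ) x'
          ≤ dX.d x' x := by
        have h := hL0' x' x
        nlinarith [dX.nonneg x' x, mul_nonneg (sub_nonneg.mpr hL01.le) (dX.nonneg x' x)]
      have hx := congrFun hcomb x
      have hx' := congrFun hcomb x'
      field_simp at hx hx'
      linarith [e1, e2, hx, hx']
    have h0 := le_zero_of_forall_mul_le _ (dX.d x x' + dX.d x' x) key
    linarith
  -- Step B : if T g - T 0 is constant then g is "flat"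
  have stepB : ∀ (g : SLipLtOne dY.d) (k : ℝ),
      (∀ x, (T g : X → ℝ) x
        - (T ⟨fun _ => 0, const_mem_SLipLtOne dY.d 0⟩ : X → ℝ) x = k) →
      ∀ y y' : Y, (g : Y → ℝ) y' ≤ (g : Y → ℝ) y := by
    intro g k hk y y'
    have key : ∀ n : ℕ, ((n:ℝ)+1) * ((g : Y → ℝ) y' - (g : Y → ℝ) y) ≤ dY.d y y' := by
      intro n
      have hm0 : (0:ℝ) < (n:ℝ) + 1 := by positivity
      have hm' : ((n:ℝ) + 1) ≠ 0 := ne_of_gt hm0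
      have hcn : (0:ℝ) ≤ (n:ℝ) := Nat.cast_nonneg n
      have hl : 1 / ((n:ℝ)+1) ∈ Set.Icc (0:ℝ) 1 :=
        ⟨by positivity, by rw [div_le_one hm0]; linarith⟩
      have hmem' : (fun x => (T ⟨fun _ => 0, const_mem_SLipLtOne dY.d 0⟩ : X → ℝ) x
          + ((n:ℝ)+1) * k) ∈ SLipLtOne dX.d :=
        shift_mem_SLipLtOne dX.d (T ⟨fun _ => 0, const_mem_SLipLtOne dY.d 0⟩).2 (((n:ℝ)+1)*k)
      obtain ⟨a, ha⟩ := hbij.2 ⟨_, hmem'⟩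
      have hmem : (fun z => 1/((n:ℝ)+1) * (a : Y → ℝ) z
          + (1 - 1/((n:ℝ)+1)) *
            ((⟨fun _ => 0, const_mem_SLipLtOne dY.d 0⟩ : SLipLtOne dY.d) : Y → ℝ) z)
          ∈ SLipLtOne dY.d :=
        combo_mem_SLipLtOne dY.d a.2
          (⟨fun _ => 0, const_mem_SLipLtOne dY.d 0⟩ : SLipLtOne dY.d).2 hl
      have hcomb := hconv a ⟨fun _ => 0, const_mem_SLipLtOne dY.d 0⟩ (1/((n:ℝ)+1)) hl hmem
      have hTeq : T (⟨_, hmem⟩ : SLipLtOne dY.d) = T g := by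
        apply Subtype.ext
        rw [hcomb]
        funext z
        have hTaz : (T a : X → ℝ) z
            = (T ⟨fun _ => 0, const_mem_SLipLtOne dY.d 0⟩ : X → ℝ) z + ((n:ℝ)+1) * k := by
          rw [ha]
        have hgz : (T g : X → ℝ) z
            = (T ⟨fun _ => 0, const_mem_SLipLtOne dY.d 0⟩ : X → ℝ) z + k := by
          have := hk z; linarith
        rw [hTaz, hgz]
        field_simp
        ring
      have hag := hbij.1 hTeq
      have hy' : 1/((n:ℝ)+1) * (a : Y → ℝ) y' + (1 - 1/((n:ℝ)+1)) * 0
          = (g : Y → ℝ) y' := congrFun (congrArg Subtype.val hag) y'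
      have hy : 1/((n:ℝ)+1) * (a : Y → ℝ) y + (1 - 1/((n:ℝ)+1)) * 0
          = (g : Y → ℝ) y := congrFun (congrArg Subtype.val hag) y
      obtain ⟨L, hL0, hL1, hLa⟩ := a.2
      have h1 := hLa y y'
      have e1 : (a : Y → ℝ) y' - (a : Y → ℝ) y ≤ dY.d y y' := by
        nlinarith [dY.nonneg y y', mul_nonneg (sub_nonneg.mpr hL1.le) (dY.nonneg y y')]
      field_simp at hy hy'
      linarith [e1, hy, hy']
    have h0 := le_zero_of_forall_mul_le _ (dY.d y y') key
    linarith
  constructor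
  · -- part (a)
    intro g
    constructor
    · rintro ⟨k, hk⟩
      have hle := stepB g k hk
      by_cases hY : Nonempty Y
      · obtain ⟨y0⟩ := hY
        exact ⟨(g : Y → ℝ) y0, fun y => le_antisymm (hle y0 y) (hle y y0)⟩
      · exact ⟨0, fun y => absurd ⟨y⟩ hY⟩
    · rintro ⟨k, hk⟩
      have hg : g = ⟨fun _ => k, const_mem_SLipLtOne dY.d k⟩ :=
        Subtype.ext (funext hk)
      by_cases hX : Nonempty X
      · obtain ⟨x0⟩ := hX
        refine ⟨(T g : X → ℝ) x0
          - (T ⟨fun _ => 0, const_mem_SLipLtOne dY.d 0⟩ : X → ℝ) x0, fun x => ?_⟩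
        rw [hg]
        exact le_antisymm (stepA k x0 x) (stepA k x x0)
      · exact ⟨0, fun x => absurd ⟨x⟩ hX⟩
  · -- part (b)
    by_cases hX : Nonempty X
    · by_cases hY : Nonempty Y
      · obtain ⟨x0⟩ := hX
        obtain ⟨y0⟩ := hY
        have hconst : ∀ (r : ℝ) (x : X),
            (T ⟨fun _ => r, const_mem_SLipLtOne dY.d r⟩ : X → ℝ) x
              - (T ⟨fun _ => 0, const_mem_SLipLtOne dY.d 0⟩ : X → ℝ) x
            = (T ⟨fun _ => r, const_mem_SLipLtOne dY.d r⟩ : X → ℝ) x0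
              - (T ⟨fun _ => 0, const_mem_SLipLtOne dY.d 0⟩ : X → ℝ) x0 :=
          fun r x => le_antisymm (stepA r x0 x) (stepA r x x0)
        obtain ⟨c, hc⟩ : ∃ c : ℝ, ∀ x,
            (T ⟨fun _ => 1, const_mem_SLipLtOne dY.d 1⟩ : X → ℝ) x
              = (T ⟨fun _ => 0, const_mem_SLipLtOne dY.d 0⟩ : X → ℝ) x + c :=
          ⟨(T ⟨fun _ => 1, const_mem_SLipLtOne dY.d 1⟩ : X → ℝ) x0
            - (T ⟨fun _ => 0, const_mem_SLipLtOne dY.d 0⟩ : X → ℝ) x0,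
            fun x => by linarith [hconst 1 x]⟩
        have hc0 : 0 ≤ c := by
          have h01 : ∀ y : Y,
              ((⟨fun _ => 0, const_mem_SLipLtOne dY.d 0⟩ : SLipLtOne dY.d) : Y → ℝ) y
              ≤ ((⟨fun _ => 1, const_mem_SLipLtOne dY.d 1⟩ : SLipLtOne dY.d) : Y → ℝ) y :=
            fun y => show (0:ℝ) ≤ 1 from zero_le_one
          have h2 := (horder _ _).mp h01 x0
          linarith [hc x0]
        have hcne : c ≠ 0 := by
          intro h
          have hT10 : T ⟨fun _ => 1, const_mem_SLipLtOne dY.d 1⟩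
              = T ⟨fun _ => 0, const_mem_SLipLtOne dY.d 0⟩ := by
            apply Subtype.ext
            funext x
            rw [hc x, h, add_zero]
          have h10 : (1:ℝ) = 0 :=
            congrFun (congrArg Subtype.val (hbij.1 hT10)) y0
          exact one_ne_zero h10
        have hcpos : 0 < c := lt_of_le_of_ne hc0 (Ne.symm hcne)
        have hposf : ∀ l : ℝ, 0 ≤ l → ∀ x,
            (T ⟨fun _ => l, const_mem_SLipLtOne dY.d l⟩ : X → ℝ) x
              = (T ⟨fun _ => 0, const_mem_SLipLtOne dY.d 0⟩ : X → ℝ) x + c * l := by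
          intro l hl0 x
          rcases le_or_gt l 1 with h1 | h1
          · have hmem : (fun y => l *
                ((⟨fun _ => (1:ℝ), const_mem_SLipLtOne dY.d 1⟩ : SLipLtOne dY.d) : Y → ℝ) y
                + (1 - l) *
                ((⟨fun _ => 0, const_mem_SLipLtOne dY.d 0⟩ : SLipLtOne dY.d) : Y → ℝ) y)
                ∈ SLipLtOne dY.d :=
              ⟨0, le_rfl, zero_lt_one, fun a b => by simp⟩
            have heq : (⟨fun _ => l, const_mem_SLipLtOne dY.d l⟩ : SLipLtOne dY.d)
                = ⟨_, hmem⟩ :=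
              Subtype.ext (funext fun y => by show l = l * 1 + (1 - l) * 0; ring)
            have hcomb : (T ⟨fun _ => l, const_mem_SLipLtOne dY.d l⟩ : X → ℝ)
                = fun z => l * (T ⟨fun _ => 1, const_mem_SLipLtOne dY.d 1⟩ : X → ℝ) z
                  + (1 - l) * (T ⟨fun _ => 0, const_mem_SLipLtOne dY.d 0⟩ : X → ℝ) z := by
              rw [heq]; exact hconv _ _ _ ⟨hl0, h1⟩ hmem
            have hx := congrFun hcomb x
            rw [hc x] at hx
            linear_combination hx
          · have hlpos : (0:ℝ) < l := by linarith
            have hlne : l ≠ 0 := ne_of_gt hlpos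
            have hl' : 1/l ∈ Set.Icc (0:ℝ) 1 :=
              ⟨by positivity, by rw [div_le_one hlpos]; linarith⟩
            have hmem : (fun y => 1/l *
                ((⟨fun _ => l, const_mem_SLipLtOne dY.d l⟩ : SLipLtOne dY.d) : Y → ℝ) y
                + (1 - 1/l) *
                ((⟨fun _ => 0, const_mem_SLipLtOne dY.d 0⟩ : SLipLtOne dY.d) : Y → ℝ) y)
                ∈ SLipLtOne dY.d :=
              ⟨0, le_rfl, zero_lt_one, fun a b => by simp⟩
            have heq : (⟨fun _ => (1:ℝ), const_mem_SLipLtOne dY.d 1⟩ : SLipLtOne dY.d)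
                = ⟨_, hmem⟩ :=
              Subtype.ext (funext fun y => by
                show (1:ℝ) = 1/l * l + (1 - 1/l) * 0
                field_simp
                ring)
            have hcomb : (T ⟨fun _ => (1:ℝ), const_mem_SLipLtOne dY.d 1⟩ : X → ℝ)
                = fun z => 1/l * (T ⟨fun _ => l, const_mem_SLipLtOne dY.d l⟩ : X → ℝ) z
                  + (1 - 1/l) * (T ⟨fun _ => 0, const_mem_SLipLtOne dY.d 0⟩ : X → ℝ) z := by
              rw [heq]; exact hconv _ _ _ hl' hmem
            have hx := congrFun hcomb x
            rw [hc x] at hx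
            field_simp at hx
            linarith [hx]
        have hnegf : ∀ l : ℝ, l < 0 → ∀ x,
            (T ⟨fun _ => l, const_mem_SLipLtOne dY.d l⟩ : X → ℝ) x
              = (T ⟨fun _ => 0, const_mem_SLipLtOne dY.d 0⟩ : X → ℝ) x + c * l := by
          intro l hl0 x
          have hmem : (fun y => (1/2 : ℝ) *
              ((⟨fun _ => l, const_mem_SLipLtOne dY.d l⟩ : SLipLtOne dY.d) : Y → ℝ) y
              + (1 - (1/2 : ℝ)) *
              ((⟨fun _ => -l, const_mem_SLipLtOne dY.d (-l)⟩ : SLipLtOne dY.d) : Y → ℝ) y)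
              ∈ SLipLtOne dY.d :=
            ⟨0, le_rfl, zero_lt_one, fun a b => by simp⟩
          have heq : (⟨fun _ => (0:ℝ), const_mem_SLipLtOne dY.d 0⟩ : SLipLtOne dY.d)
              = ⟨_, hmem⟩ :=
            Subtype.ext (funext fun y => by
              show (0:ℝ) = 1/2 * l + (1 - (1/2 : ℝ)) * (-l); ring)
          have hcomb : (T ⟨fun _ => (0:ℝ), const_mem_SLipLtOne dY.d 0⟩ : X → ℝ)
              = fun z => (1/2 : ℝ) *
                  (T ⟨fun _ => l, const_mem_SLipLtOne dY.d l⟩ : X → ℝ) z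
                + (1 - (1/2 : ℝ)) *
                  (T ⟨fun _ => -l, const_mem_SLipLtOne dY.d (-l)⟩ : X → ℝ) z := by
            rw [heq]; exact hconv _ _ _ ⟨by norm_num, by norm_num⟩ hmem
          have hx := congrFun hcomb x
          have hneg := hposf (-l) (by linarith) x
          linarith [hx, hneg]
        refine ⟨c, hcpos, fun l x => ?_⟩
        rcases le_or_gt 0 l with h | h
        · exact hposf l h x
        · exact hnegf l h x
      · -- Y empty, X nonempty : contradiction
        exfalso
        obtain ⟨x0⟩ := hX
        obtain ⟨g1, hg1⟩ := hbij.2 ⟨fun _ => 0, const_mem_SLipLtOne dX.d 0⟩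
        obtain ⟨g2, hg2⟩ := hbij.2 ⟨fun _ => 1, const_mem_SLipLtOne dX.d 1⟩
        have hgg : g1 = g2 := Subtype.ext (funext fun y => absurd ⟨y⟩ hY)
        rw [hgg, hg2] at hg1
        have h01 : (1:ℝ) = 0 := congrFun (congrArg Subtype.val hg1) x0
        exact one_ne_zero h01
    · exact ⟨1, one_pos, fun l x => absurd ⟨x⟩ hX⟩
end

section
/- Let (X,d) and (Y,ρ) be bicomplete quasi-metric spaces, let SLip₁(X̄) = {f : X → ℝ : f(x) − f(y) ≤ d(x,y) for all x,y} and SLip₁(Ȳ) = {f : Y → ℝ : f(y) − f(y') ≤ ρ(y,y') for all y,y'}, and let T : SLip₁(Ȳ) → SLip₁(X̄) be a convex lattice isomorphism, i.e. a bijection such that f ≥ g pointwise iff Tf ≥ Tg pointwise, and T(λf + (1−λ)g) = λTf + (1−λ)Tg for all f,g ∈ SLip₁(Ȳ) and λ ∈ [0,1]. Then there exist α > 0 and a bijection τ : X → Y such that, setting d'(x,x') := d(x,x') + (T0)(x') − (T0)(x): (i) d' is a quasi-metric on X and (X,d) is almost isometric to (X,d'); (ii) τ is an isometry from (X, α·d')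 to (Y,ρ), i.e. ρ(τ(x),τ(x')) = α d'(x,x') for all x,x' ∈ X; and (iii) Tf = α⁻¹·(f∘τ) + T0 for every f ∈ SLip₁(Ȳ). -/
/-- The set of backward semi-Lipschitz functions with constant at most `1`. -/
def SLipBar1 {X : Type*} (d : X → X → ℝ) : Set (X → ℝ) :=
  {f | ∀ x y, f x - f y ≤ d x y}

/-- The zero function belongs to `SLip₁(X̄)`. -/
lemma zero_mem_SLipBar1 {X : Type*} (d : QuasiMetric X) :
    (fun _ : X => (0 : ℝ)) ∈ SLipBar1 d.d :=
  fun x y => by simpa using d.nonneg x y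

namespace RepAux

variable {X Y : Type*}

lemma mem_const (d : QuasiMetric Y) (c : ℝ) : (fun _ : Y => c) ∈ SLipBar1 d.d :=
  fun x y => by simpa using d.nonneg x y

lemma mem_translate {d : QuasiMetric Y} {f : Y → ℝ} (hf : f ∈ SLipBar1 d.d) (c : ℝ) :
    (fun y => f y + c) ∈ SLipBar1 d.d := by
  intro x y
  show f x + c - (f y + c) ≤ d.d x y
  have := hf x y
  linarith

lemma mem_conePos (d : QuasiMetric Y) (y0 : Y) : (fun z => d.d z y0) ∈ SLipBar1 d.d := by
  intro x y
  show d.d x y0 - d.d y y0 ≤ d.d x y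
  have := d.triangle x y0 y
  linarith

lemma mem_coneNeg (d : QuasiMetric Y) (y0 : Y) : (fun z => -d.d y0 z) ∈ SLipBar1 d.d := by
  intro x y
  show -d.d y0 x - -d.d y0 y ≤ d.d x y
  have := d.triangle y0 y x
  linarith

lemma mem_combo {d : QuasiMetric Y} {f g : Y → ℝ} (hf : f ∈ SLipBar1 d.d)
    (hg : g ∈ SLipBar1 d.d) {l : ℝ} (h0 : 0 ≤ l) (h1 : l ≤ 1) :
    (fun y => l * f y + (1 - l) * g y) ∈ SLipBar1 d.d := by
  intro x y
  show l * f x + (1 - l) * g x - (l * f y + (1 - l) * g y) ≤ d.d x y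
  have h2 := mul_le_mul_of_nonneg_left (hf x y) h0
  have h3 := mul_le_mul_of_nonneg_left (hg x y) (by linarith : (0:ℝ) ≤ 1 - l)
  nlinarith

/-- translate an element of `SLipBar1` by a constant -/
def tr {d : QuasiMetric Y} (f : SLipBar1 d.d) (c : ℝ) : SLipBar1 d.d :=
  ⟨fun y => (f : Y → ℝ) y + c, mem_translate f.2 c⟩

lemma nat_one_div_lt {ε : ℝ} (hε : 0 < ε) :
    ∃ N : ℕ, ∀ n : ℕ, n ≥ N → (1:ℝ)/(n+1) < ε/2 := by
  obtain ⟨N, hN⟩ := exists_nat_gt (2/ε)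
  refine ⟨N, fun n hn => ?_⟩
  have h1 : (2:ℝ)/ε < (n:ℝ)+1 := by
    have : (N:ℝ) ≤ n := Nat.cast_le.mpr hn
    linarith
  have h3 : (0:ℝ) < (n:ℝ)+1 := by positivity
  have h4 : 2 < ε * ((n:ℝ)+1) := by
    rw [div_lt_iff₀ hε] at h1
    nlinarith
  rw [div_lt_div_iff₀ h3 two_pos]
  linarith

lemma core (dX : QuasiMetric X) (dY : QuasiMetric Y)
    (hYc : IsCompleteSeq (fun y y' => max (dY.d y y') (dY.d y' y)))
    (S : SLipBar1 dY.d → SLipBar1 dX.d)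
    (hbij : Function.Bijective S)
    (horder : ∀ f g : SLipBar1 dY.d,
      (∀ y, (g : Y → ℝ) y ≤ (f : Y → ℝ) y) ↔
      (∀ x, (S g : X → ℝ) x ≤ (S f : X → ℝ) x))
    (hconv : ∀ (f g : SLipBar1 dY.d) (l : ℝ), l ∈ Set.Icc (0 : ℝ) 1 →
      ∀ h : (fun y => l * (f : Y → ℝ) y + (1 - l) * (g : Y → ℝ) y)
          ∈ SLipBar1 dY.d,
      (S ⟨_, h⟩ : X → ℝ)
        = fun x => l * (S f : X → ℝ) x + (1 - l) * (S g : X → ℝ) x)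
    (hS0 : ∀ x, (S ⟨fun _ => (0:ℝ), mem_const dY 0⟩ : X → ℝ) x = 0)
    (hX : Nonempty X) :
    ∃ β : ℝ, 0 < β ∧ ∃ τ : X → Y,
      ∀ (f : SLipBar1 dY.d) (x : X), (S f : X → ℝ) x = β * (f : Y → ℝ) (τ x) := by
  classical
  set zero : SLipBar1 dY.d := ⟨fun _ => (0:ℝ), mem_const dY 0⟩ with hzero
  -- Step 1 : the translation formula
  have E1 : ∀ (f : SLipBar1 dY.d) (l R : ℝ), 0 ≤ l → l ≤ 1 → ∀ x,
      (S (tr f (l * R)) : X → ℝ) x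
        = l * (S (tr f R) : X → ℝ) x + (1 - l) * (S f : X → ℝ) x := by
    intro f l R h0 h1 x
    have hmem := mem_combo (tr f R).2 f.2 h0 h1
    have heq : tr f (l * R) = (⟨_, hmem⟩ : SLipBar1 dY.d) := by
      apply Subtype.ext; funext y
      show (f : Y → ℝ) y + l * R = l * ((f : Y → ℝ) y + R) + (1 - l) * (f : Y → ℝ) y
      ring
    rw [heq]
    exact congrFun (hconv (tr f R) f l ⟨h0, h1⟩ hmem) x
  have E3 : ∀ (f g : SLipBar1 dY.d) (x : X),
      (S (tr f 1) : X → ℝ) x - (S f : X → ℝ) x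
        = (S (tr g 1) : X → ℝ) x - (S g : X → ℝ) x := by
    intro f g x
    have hmA := mem_combo (l := 1/2) (tr f 1).2 g.2 (by norm_num) (by norm_num)
    have hmB := mem_combo (l := 1/2) f.2 (tr g 1).2 (by norm_num) (by norm_num)
    have hAB : (⟨_, hmA⟩ : SLipBar1 dY.d) = ⟨_, hmB⟩ := by
      apply Subtype.ext; funext y
      show (1:ℝ)/2 * ((f : Y → ℝ) y + 1) + (1 - 1/2) * (g : Y → ℝ) y
          = 1/2 * (f : Y → ℝ) y + (1 - 1/2) * ((g : Y → ℝ) y + 1)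
      ring
    have e1 := congrFun (hconv (tr f 1) g (1/2) (by norm_num) hmA) x
    have e2 := congrFun (hconv f (tr g 1) (1/2) (by norm_num) hmB) x
    have e3 := congrFun (congrArg Subtype.val (congrArg S hAB)) x
    rw [e1, e2] at e3
    norm_num at e3
    linarith
  set κ : X → ℝ := fun x => (S (tr zero 1) : X → ℝ) x with hκ
  have htrans : ∀ (f : SLipBar1 dY.d) (c : ℝ) (x : X),
      (S (tr f c) : X → ℝ) x = (S f : X → ℝ) x + c * κ x := by
    have hκf : ∀ (f : SLipBar1 dY.d) (x : X),
        (S (tr f 1) : X → ℝ) x - (S f : X → ℝ) x = κ x := by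
      intro f x
      have := E3 f zero x
      rw [hS0 x] at this
      simpa using this
    have hpos : ∀ (f : SLipBar1 dY.d) (c : ℝ), 0 ≤ c → ∀ x,
        (S (tr f c) : X → ℝ) x = (S f : X → ℝ) x + c * κ x := by
      intro f c hc x
      rcases le_or_gt c 1 with h | h
      · have h1 := E1 f c 1 hc h x
        rw [mul_one] at h1
        rw [h1, ← hκf f x]
        ring
      · have hc0 : c ≠ 0 := by positivity
        have h1 := E1 f (1/c) c (by positivity) (by rw [div_le_one (by linarith)]; linarith) x
        rw [one_div_mul_cancel hc0] at h1
        have hcc : c * c⁻¹ = 1 := mul_inv_cancel₀ hc0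
        rw [← hκf f x]
        linear_combination (-c) * h1 + ((S f : X → ℝ) x - (S (tr f c) : X → ℝ) x) * hcc
    intro f c x
    rcases le_or_gt 0 c with hc | hc
    · exact hpos f c hc x
    · have h1 : tr (tr f c) (-c) = f := by
        apply Subtype.ext; funext y
        show (f : Y → ℝ) y + c + -c = (f : Y → ℝ) y
        ring
      have h2 := hpos (tr f c) (-c) (by linarith) x
      rw [h1] at h2
      linarith
  obtain ⟨x₀⟩ := hX
  set β : ℝ := κ x₀ with hβdef
  have hκconst : ∀ x, κ x = β := by
    intro x
    have key : ∀ c : ℝ, c * (κ x - β) ≤ dX.d x x₀ := by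
      intro c
      have hmem := (S (tr zero c)).2
      have h1 := hmem x x₀
      have e1 := htrans zero c x
      have e2 := htrans zero c x₀
      rw [hS0 x] at e1
      rw [hS0 x₀] at e2
      rw [e1, e2] at h1
      linarith [h1]
    by_contra hne
    have ht : κ x - β ≠ 0 := sub_ne_zero.mpr hne
    have h2 := key ((dX.d x x₀ + 1) / (κ x - β))
    rw [div_mul_cancel₀ _ ht] at h2
    linarith
  have hβ0 : 0 ≤ β := by
    have h01 : ∀ y, (zero : Y → ℝ) y ≤ (tr zero 1 : Y → ℝ) y := by
      intro y
      show (0:ℝ) ≤ (0:ℝ) + 1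
      norm_num
    have := (horder (tr zero 1) zero).mp h01 x₀
    rw [hS0 x₀] at this
    exact this
  have hYne : Nonempty Y := by
    by_contra hY
    rw [not_nonempty_iff] at hY
    obtain ⟨f0, hf0⟩ := hbij.2 ⟨fun _ => (0:ℝ), mem_const dX 0⟩
    obtain ⟨f1, hf1⟩ := hbij.2 ⟨fun _ => (1:ℝ), mem_const dX 1⟩
    have hf : f0 = f1 := Subtype.ext (funext fun y => (hY.elim y))
    rw [hf, hf1] at hf0
    have := congrFun (congrArg Subtype.val hf0) x₀
    norm_num at this
  have hβpos : 0 < β := by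
    rcases eq_or_lt_of_le hβ0 with h | h
    · exfalso
      obtain ⟨y₀⟩ := hYne
      have hone : S (tr zero 1) = S zero := by
        apply Subtype.ext; funext z
        have e1 := htrans zero 1 z
        rw [hS0 z, hκconst z, ← h] at e1
        show (S (tr zero 1) : X → ℝ) z = (S zero : X → ℝ) z
        rw [e1, hS0 z]
        ring
      have := congrFun (congrArg Subtype.val (hbij.1 hone)) y₀
      norm_num [tr] at this
    · exact h
  -- Step 2 : pointwise representation
  have key : ∀ x : X, ∃ y : Y, ∀ f : SLipBar1 dY.d,
      (S f : X → ℝ) x = β * (f : Y → ℝ) y := by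
    intro x
    obtain ⟨g, hg⟩ := hbij.2 ⟨fun z => dX.d z x, mem_conePos dX x⟩
    obtain ⟨h, hh⟩ := hbij.2 ⟨fun z => -dX.d x z, mem_coneNeg dX x⟩
    have hgfun : ∀ z, (S g : X → ℝ) z = dX.d z x := fun z => by rw [hg]
    have hhfun : ∀ z, (S h : X → ℝ) z = -dX.d x z := fun z => by rw [hh]
    have hgpos : ∀ y, 0 ≤ (g : Y → ℝ) y := by
      have h1 : ∀ z, (S zero : X → ℝ) z ≤ (S g : X → ℝ) z := by
        intro z
        rw [hS0 z, hgfun z]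
        exact dX.nonneg z x
      intro y
      exact (horder g zero).mpr h1 y
    have hhneg : ∀ y, (h : Y → ℝ) y ≤ 0 := by
      have h1 : ∀ z, (S h : X → ℝ) z ≤ (S zero : X → ℝ) z := by
        intro z
        rw [hS0 z, hhfun z]
        simpa using dX.nonneg x z
      intro y
      exact (horder zero h).mpr h1 y
    -- the mixed inequality
    have mixed : ∀ y y', dY.d y y' ≤ (g : Y → ℝ) y - (h : Y → ℝ) y' := by
      intro y y'
      set cp : SLipBar1 dY.d := ⟨fun z => dY.d z y', mem_conePos dY y'⟩ with hcp
      set u : X → ℝ := (S cp : X → ℝ) with hu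
      have humem : u ∈ SLipBar1 dX.d := (S cp).2
      have hupos : ∀ z, 0 ≤ u z := by
        have h1 : ∀ yy, (zero : Y → ℝ) yy ≤ (cp : Y → ℝ) yy := by
          intro yy
          show (0:ℝ) ≤ dY.d yy y'
          exact dY.nonneg yy y'
        intro z
        have := (horder cp zero).mp h1 z
        rwa [hS0 z] at this
      have halpha : ∀ yy, (h : Y → ℝ) yy ≤ dY.d yy y' + -(β⁻¹ * u x) := by
        have hcmp : ∀ z, (S h : X → ℝ) z ≤ (S (tr cp (-(β⁻¹ * u x))) : X → ℝ) z := by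
          intro z
          rw [hhfun z, htrans cp _ z, hκconst z]
          have hux : -(β⁻¹ * u x) * β = -u x := by
            field_simp
          rw [hux]
          have := humem x z
          linarith
        intro yy
        exact (horder (tr cp (-(β⁻¹ * u x))) h).mpr hcmp yy
      have huxb : u x ≤ -(β * (h : Y → ℝ) y') := by
        have h1 := halpha y'
        rw [dY.refl y'] at h1
        have h2 : (h : Y → ℝ) y' ≤ -(β⁻¹ * u x) := by linarith
        have h3 := mul_le_mul_of_nonneg_left h2 (le_of_lt hβpos)
        rw [mul_neg, ← mul_assoc, mul_inv_cancel₀ (ne_of_gt hβpos), one_mul] at h3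
        linarith
      have hc : ∀ z, (S (tr cp ((h : Y → ℝ) y')) : X → ℝ) z ≤ (S g : X → ℝ) z := by
        intro z
        rw [htrans cp _ z, hκconst z, hgfun z]
        have h1 := humem z x
        nlinarith
      have h2 := (horder g (tr cp ((h : Y → ℝ) y'))).mpr hc y
      have h3 : dY.d y y' + (h : Y → ℝ) y' ≤ (g : Y → ℝ) y := h2
      linarith
    -- joint smallness
    have joint : ∀ ε : ℝ, 0 < ε → ∃ y, (g : Y → ℝ) y < ε ∧ -(h : Y → ℝ) y < ε := by
      intro ε hε
      by_contra hcon
      push_neg at hcon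
      have hpt : ∀ yy, (h : Y → ℝ) yy ≤ (tr g (-ε) : Y → ℝ) yy := by
        intro yy
        show (h : Y → ℝ) yy ≤ (g : Y → ℝ) yy + -ε
        rcases lt_or_ge ((g : Y → ℝ) yy) ε with h1 | h1
        · have := hcon yy h1
          linarith [hgpos yy]
        · linarith [hhneg yy]
      have hX' := (horder (tr g (-ε)) h).mp hpt x
      rw [hhfun x, htrans g _ x, hκconst x, hgfun x, dX.refl x] at hX'
      nlinarith [mul_pos hε hβpos]
    set v : ℕ → Y := fun k => (joint (1/((k:ℝ)+1)) (by positivity)).choose with hv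
    have hv1 : ∀ k : ℕ, (g : Y → ℝ) (v k) < 1/((k:ℝ)+1) ∧ -(h : Y → ℝ) (v k) < 1/((k:ℝ)+1) :=
      fun k => (joint (1/((k:ℝ)+1)) (by positivity)).choose_spec
    have hcauchy : ∀ ε : ℝ, 0 < ε → ∃ N : ℕ, ∀ m ≥ N, ∀ n ≥ N,
        max (dY.d (v m) (v n)) (dY.d (v n) (v m)) < ε := by
      intro ε hε
      obtain ⟨N, hN⟩ := nat_one_div_lt hε
      refine ⟨N, fun m hm n hn => ?_⟩
      have hb : ∀ a b : ℕ, a ≥ N → b ≥ N → dY.d (v a) (v b) < ε := by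
        intro a b ha hb2
        have h1 := mixed (v a) (v b)
        have h2 := (hv1 a).1
        have h3 := (hv1 b).2
        have h4 := hN a ha
        have h5 := hN b hb2
        linarith
      exact max_lt (hb m n hm hn) (hb n m hn hm)
    obtain ⟨yhat, hyhat⟩ := hYc v hcauchy
    have hgy : (g : Y → ℝ) yhat = 0 := by
      have hle : ∀ ε : ℝ, 0 < ε → (g : Y → ℝ) yhat < ε := by
        intro ε hε
        obtain ⟨N1, hN1⟩ := hyhat (ε/2) (by positivity)
        obtain ⟨N2, hN2⟩ := nat_one_div_lt hε
        set n := max N1 N2 with hn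
        have h1 := hN1 n (le_max_left _ _)
        have h2 := g.2 yhat (v n)
        have h3 := (hv1 n).1
        have h4 : dY.d yhat (v n) ≤ max (dY.d (v n) yhat) (dY.d yhat (v n)) := le_max_right _ _
        have h5 := hN2 n (le_max_right _ _)
        linarith
      rcases (hgpos yhat).lt_or_eq with h1 | h1
      · exact absurd (hle _ h1) (lt_irrefl _)
      · exact h1.symm
    have hhy : (h : Y → ℝ) yhat = 0 := by
      have hle : ∀ ε : ℝ, 0 < ε → -(h : Y → ℝ) yhat < ε := by
        intro ε hε
        obtain ⟨N1, hN1⟩ := hyhat (ε/2) (by positivity)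
        obtain ⟨N2, hN2⟩ := nat_one_div_lt hε
        set n := max N1 N2 with hn
        have h1 := hN1 n (le_max_left _ _)
        have h2 := h.2 (v n) yhat
        have h3 := (hv1 n).2
        have h4 : dY.d (v n) yhat ≤ max (dY.d (v n) yhat) (dY.d yhat (v n)) := le_max_left _ _
        have h5 := hN2 n (le_max_right _ _)
        linarith
      have hge : 0 ≤ -(h : Y → ℝ) yhat := by linarith [hhneg yhat]
      rcases hge.lt_or_eq with h1 | h1
      · exact absurd (hle _ h1) (lt_irrefl _)
      · linarith
    have hgcone : ∀ y, (g : Y → ℝ) y = dY.d y yhat := by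
      intro y
      have h1 := g.2 y yhat
      have h2 := mixed y yhat
      rw [hgy] at h1
      rw [hhy] at h2
      linarith
    have hhcone : ∀ y, (h : Y → ℝ) y = -dY.d yhat y := by
      intro y
      have h1 := h.2 yhat y
      have h2 := mixed yhat y
      rw [hhy] at h1
      rw [hgy] at h2
      linarith
    refine ⟨yhat, fun f => ?_⟩
    have hup : ∀ yy, (f : Y → ℝ) yy ≤ (tr g ((f : Y → ℝ) yhat) : Y → ℝ) yy := by
      intro yy
      show (f : Y → ℝ) yy ≤ (g : Y → ℝ) yy + (f : Y → ℝ) yhat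
      have h1 := f.2 yy yhat
      rw [← hgcone yy] at h1
      linarith
    have hlo : ∀ yy, (tr h ((f : Y → ℝ) yhat) : Y → ℝ) yy ≤ (f : Y → ℝ) yy := by
      intro yy
      show (h : Y → ℝ) yy + (f : Y → ℝ) yhat ≤ (f : Y → ℝ) yy
      have h1 := f.2 yhat yy
      have h2 := hhcone yy
      linarith
    have h1 := (horder (tr g ((f : Y → ℝ) yhat)) f).mp hup x
    have h2 := (horder f (tr h ((f : Y → ℝ) yhat))).mp hlo x
    rw [htrans g _ x, hκconst x, hgfun x, dX.refl x] at h1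
    rw [htrans h _ x, hκconst x, hhfun x, dX.refl x] at h2
    linarith
  choose τ hτ using key
  exact ⟨β, hβpos, τ, fun f x => hτ x f⟩

/-- Shift a quasi-metric by a potential function. -/
def shiftQM {X : Type*} (d : QuasiMetric X) (f : X → ℝ) (hf : f ∈ SLipBar1 d.d) :
    QuasiMetric X where
  d x x' := d.d x x' + f x' - f x
  nonneg x x' := by
    show 0 ≤ d.d x x' + f x' - f x
    have := hf x x'
    linarith
  refl x := by
    show d.d x x + f x - f x = 0
    rw [d.refl]
    ring
  sep x y h1 h2 := by
    have h1' : d.d x y + f y - f x = 0 := h1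
    have h2' : d.d y x + f x - f y = 0 := h2
    have n1 := d.nonneg x y
    have n2 := d.nonneg y x
    exact d.sep x y (by linarith) (by linarith)
  triangle x y z := by
    show d.d x y + f y - f x ≤ (d.d x z + f z - f x) + (d.d z y + f y - f z)
    have := d.triangle x y z
    linarith

end RepAux

/-- Representation of convex lattice isomorphisms between the spaces
`SLip₁(Ȳ)` and `SLip₁(X̄)` of bicomplete quasi-metric spaces: every such
isomorphism `T` is of the form `Tf = α⁻¹ (f∘τ) + T0`, where `τ` is an
isometry from `(X, α·d')` onto `(Y, ρ)` and
`d'(x,x') = d(x,x') + T0(x') - T0(x)` is a quasi-metric almost isometric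
to `d`. -/
theorem representation_convex_lattice_isomorphism {X Y : Type*}
    (dX : QuasiMetric X) (dY : QuasiMetric Y)
    (hXc : IsCompleteSeq (fun x x' => max (dX.d x x') (dX.d x' x)))
    (hYc : IsCompleteSeq (fun y y' => max (dY.d y y') (dY.d y' y)))
    (T : SLipBar1 dY.d → SLipBar1 dX.d)
    (hbij : Function.Bijective T)
    (horder : ∀ f g : SLipBar1 dY.d,
      (∀ y, (g : Y → ℝ) y ≤ (f : Y → ℝ) y) ↔
      (∀ x, (T g : X → ℝ) x ≤ (T f : X → ℝ) x))
    (hconv : ∀ (f g : SLipBar1 dY.d) (l : ℝ), l ∈ Set.Icc (0 : ℝ) 1 →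
      ∀ h : (fun y => l * (f : Y → ℝ) y + (1 - l) * (g : Y → ℝ) y)
          ∈ SLipBar1 dY.d,
      (T ⟨_, h⟩ : X → ℝ)
        = fun x => l * (T f : X → ℝ) x + (1 - l) * (T g : X → ℝ) x) :
    ∃ (α : ℝ) (τ : X → Y), 0 < α ∧ Function.Bijective τ ∧
      (let φ : X → ℝ := (T ⟨fun _ => 0, zero_mem_SLipBar1 dY⟩ : X → ℝ)
       let d' : X → X → ℝ := fun x x' => dX.d x x' + φ x' - φ x
       -- (i) d' is a quasi-metric on X, almost isometric to d
       (∀ x x', 0 ≤ d' x x') ∧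
       (∀ x, d' x x = 0) ∧
       (∀ x y z, d' x y ≤ d' x z + d' z y) ∧
       (∀ x y, d' x y = 0 → d' y x = 0 → x = y) ∧
       (∀ x1 x2 x3, d' x1 x2 + d' x2 x3 - d' x1 x3
          = dX.d x1 x2 + dX.d x2 x3 - dX.d x1 x3) ∧
       -- (ii) τ is an isometry from (X, α d') to (Y, ρ)
       (∀ x x', dY.d (τ x) (τ x') = α * d' x x') ∧
       -- (iii) T is the composition operator f ↦ α⁻¹ (f∘τ) + T0
       (∀ (f : SLipBar1 dY.d) (x : X),
          (T f : X → ℝ) x = α⁻¹ * (f : Y → ℝ) (τ x) + φ x)) := by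
  classical
  by_cases hX : Nonempty X
  swap
  · -- X is empty
    rw [not_nonempty_iff] at hX
    have hY : IsEmpty Y := by
      by_contra hY
      rw [not_isEmpty_iff] at hY
      obtain ⟨y₀⟩ := hY
      have h0 : T ⟨fun _ => (0:ℝ), RepAux.mem_const dY 0⟩
          = T ⟨fun _ => (1:ℝ), RepAux.mem_const dY 1⟩ :=
        Subtype.ext (funext fun x => hX.elim x)
      have := congrFun (congrArg Subtype.val (hbij.1 h0)) y₀
      norm_num at this
    refine ⟨1, fun x => (hX.elim x), one_pos,
      ⟨fun a b _ => hX.elim a, fun y => hY.elim y⟩,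
      fun x _ => hX.elim x, fun x => hX.elim x, fun x _ _ => hX.elim x,
      fun x _ _ _ => hX.elim x, fun x _ _ => hX.elim x, fun x _ => hX.elim x,
      fun f x => hX.elim x⟩
  · -- X is nonempty
    set φ : X → ℝ := (T ⟨fun _ => 0, zero_mem_SLipBar1 dY⟩ : X → ℝ) with hφ
    have hφmem : φ ∈ SLipBar1 dX.d := (T ⟨fun _ => 0, zero_mem_SLipBar1 dY⟩).2
    set d' : QuasiMetric X := RepAux.shiftQM dX φ hφmem with hd'
    have hd'd : ∀ x x', d'.d x x' = dX.d x x' + φ x' - φ x := fun _ _ => rfl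
    -- build T'
    have hmem' : ∀ u : SLipBar1 dX.d, (fun x => (u : X → ℝ) x - φ x) ∈ SLipBar1 d'.d := by
      intro u x x'
      have h1 := u.2 x x'
      show (u : X → ℝ) x - φ x - ((u : X → ℝ) x' - φ x') ≤ d'.d x x'
      rw [hd'd]
      linarith
    have hmem'' : ∀ v : X → ℝ, v ∈ SLipBar1 d'.d → (fun x => v x + φ x) ∈ SLipBar1 dX.d := by
      intro v hv x x'
      have h1 := hv x x'
      rw [hd'd] at h1
      show v x + φ x - (v x' + φ x') ≤ dX.d x x'
      linarith
    set T' : SLipBar1 dY.d → SLipBar1 d'.d :=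
      fun f => ⟨fun x => (T f : X → ℝ) x - φ x, hmem' (T f)⟩ with hT'
    have hT'fun : ∀ (f : SLipBar1 dY.d) (x : X),
        (T' f : X → ℝ) x = (T f : X → ℝ) x - φ x := fun f x => rfl
    have hT'inj : Function.Injective T' := by
      intro f g hfg
      apply hbij.1
      apply Subtype.ext; funext x
      have h1 := congrFun (congrArg Subtype.val hfg) x
      rw [hT'fun, hT'fun] at h1
      linarith
    have hT'surj : Function.Surjective T' := by
      intro v
      obtain ⟨f, hf⟩ := hbij.2 ⟨fun x => (v : X → ℝ) x + φ x, hmem'' (v : X → ℝ) v.2⟩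
      refine ⟨f, ?_⟩
      apply Subtype.ext; funext x
      have h1 := congrFun (congrArg Subtype.val hf) x
      rw [hT'fun]
      show (T f : X → ℝ) x - φ x = (v : X → ℝ) x
      rw [h1]
      show (v : X → ℝ) x + φ x - φ x = (v : X → ℝ) x
      ring
    have hT'bij : Function.Bijective T' := ⟨hT'inj, hT'surj⟩
    have horder' : ∀ f g : SLipBar1 dY.d,
        (∀ y, (g : Y → ℝ) y ≤ (f : Y → ℝ) y) ↔
        (∀ x, (T' g : X → ℝ) x ≤ (T' f : X → ℝ) x) := by
      intro f g
      rw [horder f g]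
      constructor
      · intro h x
        rw [hT'fun, hT'fun]
        linarith [h x]
      · intro h x
        have := h x
        rw [hT'fun, hT'fun] at this
        linarith
    have hconv' : ∀ (f g : SLipBar1 dY.d) (l : ℝ), l ∈ Set.Icc (0 : ℝ) 1 →
        ∀ h : (fun y => l * (f : Y → ℝ) y + (1 - l) * (g : Y → ℝ) y)
            ∈ SLipBar1 dY.d,
        (T' ⟨_, h⟩ : X → ℝ)
          = fun x => l * (T' f : X → ℝ) x + (1 - l) * (T' g : X → ℝ) x := by
      intro f g l hl h
      funext x
      have h1 := congrFun (hconv f g l hl h) x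
      rw [hT'fun]
      show (T ⟨_, h⟩ : X → ℝ) x - φ x
          = l * (T' f : X → ℝ) x + (1 - l) * (T' g : X → ℝ) x
      rw [h1, hT'fun, hT'fun]
      ring
    have hS0' : ∀ x, (T' ⟨fun _ => (0:ℝ), RepAux.mem_const dY 0⟩ : X → ℝ) x = 0 := by
      intro x
      rw [hT'fun]
      show (T ⟨fun _ => (0:ℝ), RepAux.mem_const dY 0⟩ : X → ℝ) x
          - (T ⟨fun _ => (0:ℝ), zero_mem_SLipBar1 dY⟩ : X → ℝ) x = 0
      exact sub_self _
    -- completeness of d'ˢ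
    have hXc' : IsCompleteSeq (fun x x' => max (d'.d x x') (d'.d x' x)) := by
      intro u hu
      have hsum : ∀ a b, d'.d a b + d'.d b a = dX.d a b + dX.d b a := by
        intro a b
        rw [hd'd, hd'd]
        ring
      have hu2 : ∀ ε : ℝ, 0 < ε → ∃ N : ℕ, ∀ m ≥ N, ∀ n ≥ N,
          max (dX.d (u m) (u n)) (dX.d (u n) (u m)) < ε := by
        intro ε hε
        obtain ⟨N, hN⟩ := hu (ε/2) (by positivity)
        refine ⟨N, fun m hm n hn => ?_⟩
        have h1 := hN m hm n hn
        have l1 : d'.d (u m) (u n) ≤ max (d'.d (u m) (u n)) (d'.d (u n) (u m)) :=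
          le_max_left _ _
        have l2 : d'.d (u n) (u m) ≤ max (d'.d (u m) (u n)) (d'.d (u n) (u m)) :=
          le_max_right _ _
        have hs := hsum (u m) (u n)
        have n1 := dX.nonneg (u m) (u n)
        have n2 := dX.nonneg (u n) (u m)
        have b1 : dX.d (u m) (u n) < ε := by linarith
        have b2 : dX.d (u n) (u m) < ε := by linarith
        exact max_lt b1 b2
      obtain ⟨x, hx⟩ := hXc u hu2
      refine ⟨x, fun ε hε => ?_⟩
      obtain ⟨N, hN⟩ := hx (ε/2) (by positivity)
      refine ⟨N, fun n hn => ?_⟩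
      have h1 := hN n hn
      have hs : d'.d (u n) x + d'.d x (u n) = dX.d (u n) x + dX.d x (u n) := by
        rw [hd'd, hd'd]
        ring
      have l1 : dX.d (u n) x ≤ max (dX.d (u n) x) (dX.d x (u n)) := le_max_left _ _
      have l2 : dX.d x (u n) ≤ max (dX.d (u n) x) (dX.d x (u n)) := le_max_right _ _
      have n1 := d'.nonneg (u n) x
      have n2 := d'.nonneg x (u n)
      have b1 : d'.d (u n) x < ε := by linarith
      have b2 : d'.d x (u n) < ε := by linarith
      exact max_lt b1 b2
    -- first application of core
    obtain ⟨β, hβ, τ, hτ⟩ := RepAux.core d' dY hYc T' hT'bij horder' hconv' hS0' hX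
    -- inverse map
    set TE : SLipBar1 dY.d ≃ SLipBar1 d'.d := Equiv.ofBijective T' hT'bij with hTE
    set Tinv : SLipBar1 d'.d → SLipBar1 dY.d := ⇑TE.symm with hTinv
    have hTinv_left : ∀ f, Tinv (T' f) = f := fun f => TE.symm_apply_apply f
    have hTinv_right : ∀ u, T' (Tinv u) = u := fun u => TE.apply_symm_apply u
    have hYne : Nonempty Y := by
      by_contra hY
      rw [not_nonempty_iff] at hY
      obtain ⟨x₀⟩ := hX
      obtain ⟨f0, hf0⟩ := hT'surj ⟨fun _ => (0:ℝ), RepAux.mem_const d' 0⟩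
      obtain ⟨f1, hf1⟩ := hT'surj ⟨fun _ => (1:ℝ), RepAux.mem_const d' 1⟩
      have hf : f0 = f1 := Subtype.ext (funext fun y => hY.elim y)
      rw [hf, hf1] at hf0
      have := congrFun (congrArg Subtype.val hf0) x₀
      norm_num at this
    have horderInv : ∀ u v : SLipBar1 d'.d,
        (∀ x, (v : X → ℝ) x ≤ (u : X → ℝ) x) ↔
        (∀ y, (Tinv v : Y → ℝ) y ≤ (Tinv u : Y → ℝ) y) := by
      intro u v
      have h1 := horder' (Tinv u) (Tinv v)
      rw [hTinv_right u, hTinv_right v] at h1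
      exact h1.symm
    have hconvInv : ∀ (u v : SLipBar1 d'.d) (l : ℝ), l ∈ Set.Icc (0 : ℝ) 1 →
        ∀ h : (fun x => l * (u : X → ℝ) x + (1 - l) * (v : X → ℝ) x)
            ∈ SLipBar1 d'.d,
        (Tinv ⟨_, h⟩ : Y → ℝ)
          = fun y => l * (Tinv u : Y → ℝ) y + (1 - l) * (Tinv v : Y → ℝ) y := by
      intro u v l hl h
      have hmem := RepAux.mem_combo (Tinv u).2 (Tinv v).2 hl.1 hl.2
      have hTcombo := hconv' (Tinv u) (Tinv v) l hl hmem
      rw [hTinv_right u, hTinv_right v] at hTcombo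
      have heq : T' ⟨_, hmem⟩ = ⟨_, h⟩ := Subtype.ext hTcombo
      have h2 : Tinv ⟨_, h⟩ = ⟨_, hmem⟩ := by rw [← heq, hTinv_left]
      rw [h2]
    have hS0Inv : ∀ y, (Tinv ⟨fun _ => (0:ℝ), RepAux.mem_const d' 0⟩ : Y → ℝ) y = 0 := by
      have h0 : T' ⟨fun _ => (0:ℝ), RepAux.mem_const dY 0⟩
          = ⟨fun _ => (0:ℝ), RepAux.mem_const d' 0⟩ :=
        Subtype.ext (funext fun x => hS0' x)
      intro y
      rw [← h0, hTinv_left]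
    -- second application of core
    obtain ⟨β₂, hβ₂, σ, hσ⟩ :=
      RepAux.core dY d' hXc' Tinv TE.symm.bijective horderInv hconvInv hS0Inv hYne
    -- composition gives a right inverse
    have hcomp : ∀ (f : SLipBar1 dY.d) (y : Y),
        (f : Y → ℝ) y = β₂ * (β * (f : Y → ℝ) (τ (σ y))) := by
      intro f y
      have h1 := hσ (T' f) y
      rw [hTinv_left f] at h1
      rw [hτ f (σ y)] at h1
      exact h1
    have hββ : β₂ * β = 1 := by
      obtain ⟨y₀⟩ := hYne
      have := hcomp ⟨fun _ => (1:ℝ), RepAux.mem_const dY 1⟩ y₀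
      norm_num at this
      linarith [this]
    have hev : ∀ (f : SLipBar1 dY.d) (y : Y), (f : Y → ℝ) y = (f : Y → ℝ) (τ (σ y)) := by
      intro f y
      have h1 := hcomp f y
      rw [← mul_assoc, hββ, one_mul] at h1
      exact h1
    have hid : ∀ y, τ (σ y) = y := by
      intro y
      have e1 := hev ⟨fun z => dY.d z y, RepAux.mem_conePos dY y⟩ y
      have e2 := hev ⟨fun z => -dY.d y z, RepAux.mem_coneNeg dY y⟩ y
      have h1 : dY.d (τ (σ y)) y = 0 := by
        have : dY.d y y = dY.d (τ (σ y)) y := e1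
        rw [dY.refl y] at this
        exact this.symm
      have h2 : dY.d y (τ (σ y)) = 0 := by
        have : -dY.d y y = -dY.d y (τ (σ y)) := e2
        rw [dY.refl y] at this
        linarith [this]
      exact dY.sep _ _ h1 h2
    -- isometry
    have hiso : ∀ x x', d'.d x x' = β * dY.d (τ x) (τ x') := by
      intro x x'
      have hge : β * dY.d (τ x) (τ x') ≤ d'.d x x' := by
        have hm := (T' ⟨fun z => dY.d z (τ x'), RepAux.mem_conePos dY (τ x')⟩).2 x x'
        rw [hτ _ x, hτ _ x'] at hm
        have e1 : (((⟨fun z => dY.d z (τ x'), RepAux.mem_conePos dY (τ x')⟩ :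
            SLipBar1 dY.d) : Y → ℝ)) (τ x) = dY.d (τ x) (τ x') := rfl
        have e2 : (((⟨fun z => dY.d z (τ x'), RepAux.mem_conePos dY (τ x')⟩ :
            SLipBar1 dY.d) : Y → ℝ)) (τ x') = dY.d (τ x') (τ x') := rfl
        rw [e1, e2, dY.refl (τ x')] at hm
        linarith [hm]
      have hle : d'.d x x' ≤ β * dY.d (τ x) (τ x') := by
        set u : SLipBar1 d'.d := ⟨fun z => d'.d z x', RepAux.mem_conePos d' x'⟩ with huu
        set f : SLipBar1 dY.d := Tinv u with hfdef
        have hfu : T' f = u := hTinv_right u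
        have h1 : ∀ z, d'.d z x' = β * (f : Y → ℝ) (τ z) := by
          intro z
          have h2 := hτ f z
          have h3 := congrFun (congrArg Subtype.val hfu) z
          have h4 : (u : X → ℝ) z = d'.d z x' := rfl
          rw [← h3, h2] at h4
          exact h4.symm
        have h5 : (f : Y → ℝ) (τ x') = 0 := by
          have h6 := h1 x'
          rw [d'.refl x'] at h6
          have := hβ.ne'
          field_simp at h6
          exact (mul_eq_zero.mp h6.symm).resolve_left this
        have h6 := f.2 (τ x) (τ x')
        rw [h5] at h6
        have h7 := h1 x
        rw [h7]
        have := mul_le_mul_of_nonneg_left (by linarith [h6] : (f : Y → ℝ) (τ x) ≤ dY.d (τ x) (τ x')) (le_of_lt hβ)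
        linarith
      linarith
    have hτinj : Function.Injective τ := by
      intro a b hab
      have h1 := hiso a b
      have h2 := hiso b a
      rw [hab, dY.refl (τ b)] at h1
      have h3 : dY.d (τ b) (τ a) = 0 := by rw [hab, dY.refl]
      rw [h3] at h2
      exact d'.sep a b (by rw [h1, mul_zero]) (by rw [h2, mul_zero])
    have hτsurj : Function.Surjective τ := fun y => ⟨σ y, hid y⟩
    refine ⟨β⁻¹, τ, inv_pos.mpr hβ, ⟨hτinj, hτsurj⟩, ?_, ?_, ?_, ?_, ?_, ?_, ?_⟩
    · intro x x'
      have := d'.nonneg x x'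
      rw [hd'd] at this
      exact this
    · intro x
      have := d'.refl x
      rw [hd'd] at this
      exact this
    · intro x y z
      have := d'.triangle x y z
      rw [hd'd, hd'd, hd'd] at this
      exact this
    · intro x y h1 h2
      exact d'.sep x y (by rw [hd'd]; exact h1) (by rw [hd'd]; exact h2)
    · intro x1 x2 x3
      ring
    · intro x x'
      show dY.d (τ x) (τ x') = β⁻¹ * (dX.d x x' + φ x' - φ x)
      have h1 := hiso x x'
      rw [hd'd] at h1
      rw [h1, ← mul_assoc, inv_mul_cancel₀ hβ.ne', one_mul]
    · intro f x
      have h1 := hτ f x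
      rw [hT'fun] at h1
      rw [inv_inv]
      linarith
end
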